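/- arXiv:2006.05192 — 10 statements merged into one kernel-verified Lean document; each statement's English description precedes it below -/
import Mathlib

section
/- Let λ_1,...,λ_n be nonnegative real numbers such that for every k ∈ {1,...,n}, Σ_{i≠k} λ_i ≤ 1. Then Σ_{i=1}^n λ_i/(1+λ_i) ≤ 1. Moreover, if at least one of the inequalities Σ_{i≠k} λ_i ≤ 1 is strict, then Σ_{i=1}^n λ_i/(1+λ_i) < 1. -/
/-!
Let `S = ∑ λᵢ`. If `S < 1`, then `λᵢ / (1 + λᵢ) ≤ λᵢ` already gives the claim. Otherwise the
hypothesis for index `k` reads `S ≤ 1 + λₖ`, so `λᵢ / (1 + λᵢ) ≤ λᵢ / S`, and these bounds sum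
to `1`; a strict hypothesis `S - λₖ < 1` forces `λₖ > 0` and makes the `k`-th bound strict.
-/

open Finset

section Finset

variable {ι : Type*} {s : Finset ι} {f : ι → ℝ}

lemma sum_div_one_add_le_sum (h0 : ∀ i ∈ s, 0 ≤ f i) :
    ∑ i ∈ s, f i / (1 + f i) ≤ ∑ i ∈ s, f i :=
  sum_le_sum fun i hi => div_le_self (h0 i hi) (le_add_of_nonneg_right (h0 i hi))

lemma sum_div_one_add_le_one_of_sum_le (h0 : ∀ i ∈ s, 0 ≤ f i) (hS : 0 < ∑ i ∈ s, f i)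
    (h : ∀ i ∈ s, ∑ j ∈ s, f j ≤ 1 + f i) :
    ∑ i ∈ s, f i / (1 + f i) ≤ 1 :=
  calc ∑ i ∈ s, f i / (1 + f i)
      ≤ ∑ i ∈ s, f i / ∑ j ∈ s, f j :=
        sum_le_sum fun i hi => div_le_div_of_nonneg_left (h0 i hi) hS (h i hi)
    _ = 1 := by rw [← sum_div, div_self hS.ne']

lemma sum_div_one_add_lt_one_of_sum_le (h0 : ∀ i ∈ s, 0 ≤ f i) (hS : 0 < ∑ i ∈ s, f i)
    (h : ∀ i ∈ s, ∑ j ∈ s, f j ≤ 1 + f i) {k : ι} (hk : k ∈ s) (hfk : 0 < f k)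
    (hk_lt : ∑ j ∈ s, f j < 1 + f k) :
    ∑ i ∈ s, f i / (1 + f i) < 1 :=
  calc ∑ i ∈ s, f i / (1 + f i)
      < ∑ i ∈ s, f i / ∑ j ∈ s, f j :=
        sum_lt_sum (fun i hi => div_le_div_of_nonneg_left (h0 i hi) hS (h i hi))
          ⟨k, hk, div_lt_div_of_pos_left hfk hS hk_lt⟩
    _ = 1 := by rw [← sum_div, div_self hS.ne']

end Finset

section Fintype

variable {ι : Type*} [Fintype ι] [DecidableEq ι] {lam : ι → ℝ}

lemma sum_le_one_add_of_sum_erase_le {k : ι} (hk : ∑ i ∈ univ.erase k, lam i ≤ 1) :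
    ∑ i, lam i ≤ 1 + lam k := by
  rw [← add_sum_erase _ _ (mem_univ k)]
  linarith

lemma sum_div_one_add_le_one (h0 : ∀ i, 0 ≤ lam i)
    (h : ∀ k, ∑ i ∈ univ.erase k, lam i ≤ 1) :
    ∑ i, lam i / (1 + lam i) ≤ 1 := by
  rcases lt_or_ge (∑ i, lam i) 1 with hS | hS
  · exact (sum_div_one_add_le_sum fun i _ => h0 i).trans hS.le
  · exact sum_div_one_add_le_one_of_sum_le (fun i _ => h0 i) (by linarith)
      fun k _ => sum_le_one_add_of_sum_erase_le (h k)

lemma sum_div_one_add_lt_one (h0 : ∀ i, 0 ≤ lam i)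
    (h : ∀ k, ∑ i ∈ univ.erase k, lam i ≤ 1) {k : ι} (hk : ∑ i ∈ univ.erase k, lam i < 1) :
    ∑ i, lam i / (1 + lam i) < 1 := by
  rcases lt_or_ge (∑ i, lam i) 1 with hS | hS
  · exact (sum_div_one_add_le_sum fun i _ => h0 i).trans_lt hS
  · have hsplit := add_sum_erase univ lam (mem_univ k)
    exact sum_div_one_add_lt_one_of_sum_le (fun i _ => h0 i) (by linarith)
      (fun j _ => sum_le_one_add_of_sum_erase_le (h j)) (mem_univ k) (by linarith) (by linarith)

end Fintype

theorem stmt1 (n : ℕ) (lam : Fin n → ℝ) (h0 : ∀ i, 0 ≤ lam i)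
    (h : ∀ k : Fin n, ∑ i ∈ Finset.univ.erase k, lam i ≤ 1) :
    (∑ i, lam i / (1 + lam i) ≤ 1) ∧
    ((∃ k : Fin n, ∑ i ∈ Finset.univ.erase k, lam i < 1) →
      ∑ i, lam i / (1 + lam i) < 1) :=
  ⟨sum_div_one_add_le_one h0 h, fun ⟨_, hk⟩ => sum_div_one_add_lt_one h0 h hk⟩
end

section
/- Let A be the n×n matrix with a_{ii}=1 and a_{ij} = -λ_j for i≠j, with λ ≥ 0 componentwise. If A is singular and v* is a solution of Av = b with all coordinates strictly positive and v* ∈ [0,v̄]^n, then there exists a solution w of Aw = b with w ∈ [0,v̄]^n, w nonnegative in all coordinates, and at least one coordinate of w equal to zero. -/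
/-!
Row `i` of `A v = 0` reads `(1 + λᵢ) vᵢ = ∑ⱼ λⱼ vⱼ`, so every kernel vector is a multiple of
`p = ((1 + λᵢ)⁻¹)ᵢ`; as `A` is singular, `p` itself lies in the kernel and has positive entries.
Moving from `v*` along `-p` by `t = minᵢ v*ᵢ / pᵢ` keeps `Aw = b`, lowers every coordinate but
keeps it nonnegative, and makes the minimizing coordinate vanish.
-/

open Matrix

theorem exists_pos_forall_sub_mul_nonneg_and_exists_eq_zero {ι 𝕜 : Type*} [Finite ι] [Nonempty ι]
    [Field 𝕜] [LinearOrder 𝕜] [IsStrictOrderedRing 𝕜] {v p : ι → 𝕜}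
    (hv : ∀ i, 0 < v i) (hp : ∀ i, 0 < p i) :
    ∃ t, 0 < t ∧ (∀ i, 0 ≤ v i - t * p i) ∧ ∃ i, v i - t * p i = 0 := by
  obtain ⟨i₀, hmin⟩ := Finite.exists_min fun i => v i / p i
  refine ⟨v i₀ / p i₀, div_pos (hv i₀) (hp i₀), fun i => ?_, i₀, ?_⟩
  · rw [sub_nonneg, ← le_div_iff₀ (hp i)]
    exact hmin i
  · rw [div_mul_cancel₀ _ (hp i₀).ne', sub_self]

variable {ι : Type*} [Fintype ι] [DecidableEq ι]

theorem mulVec_of_one_neg_apply {R : Type*} [CommRing R] (lam u : ι → R) (i : ι) :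
    (of (fun i j => if i = j then 1 else -lam j) *ᵥ u) i = (1 + lam i) * u i - ∑ j, lam j * u j := by
  have hdecomp : of (fun i j => if i = j then (1 : R) else -lam j) =
      diagonal (1 + lam) - of fun _ j => lam j := by
    ext i j
    by_cases h : i = j <;> simp [h]
  rw [hdecomp, sub_mulVec, Pi.sub_apply, mulVec_diagonal]
  simp [mulVec, dotProduct]

theorem exists_pos_mulVec_of_one_neg_eq_zero {𝕜 : Type*} [Field 𝕜] [LinearOrder 𝕜]
    [IsStrictOrderedRing 𝕜] {lam : ι → 𝕜} (hlam : ∀ i, 0 ≤ lam i)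
    (hsing : (of fun i j => if i = j then 1 else -lam j).det = 0) :
    ∃ p : ι → 𝕜, (∀ i, 0 < p i) ∧ (of fun i j => if i = j then 1 else -lam j) *ᵥ p = 0 := by
  obtain ⟨u, hu, huA⟩ := exists_mulVec_eq_zero_iff.mpr hsing
  set s := ∑ j, lam j * u j
  have hlam_pos : ∀ i, 0 < 1 + lam i := fun i => by linarith [hlam i]
  have hrow : ∀ i, (1 + lam i) * u i = s := fun i => by
    have := congrFun huA i
    rw [mulVec_of_one_neg_apply, Pi.zero_apply, sub_eq_zero] at this
    exact this
  have hs : s ≠ 0 := fun hs => hu <| funext fun i => by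
    simpa [hs, (hlam_pos i).ne'] using hrow i
  refine ⟨s⁻¹ • u, fun i => ?_, by rw [mulVec_smul, huA, smul_zero]⟩
  have hp : (s⁻¹ • u) i * (1 + lam i) = 1 := by
    rw [Pi.smul_apply, smul_eq_mul, mul_assoc, mul_comm (u i), hrow, inv_mul_cancel₀ hs]
  exact pos_of_mul_pos_left (hp.symm ▸ one_pos) (hlam_pos i).le

theorem stmt2_general (n : ℕ) (vbar : ℝ)
    (lam b : Fin n → ℝ) (hlam : ∀ i, 0 ≤ lam i)
    (A : Matrix (Fin n) (Fin n) ℝ)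
    (hA : A = Matrix.of fun i j => if i = j then 1 else -lam j)
    (hsing : A.det = 0)
    (vstar : Fin n → ℝ) (hsol : A.mulVec vstar = b)
    (hpos : ∀ i, 0 < vstar i) (hub : ∀ i, vstar i ≤ vbar) :
    ∃ w : Fin n → ℝ, A.mulVec w = b ∧ (∀ i, 0 ≤ w i ∧ w i ≤ vbar) ∧ ∃ i, w i = 0 := by
  have : Nonempty (Fin n) := by
    by_contra hempty
    have : IsEmpty (Fin n) := not_nonempty_iff.mp hempty
    simp [det_isEmpty] at hsing
  subst hA
  obtain ⟨p, hp, hpA⟩ := exists_pos_mulVec_of_one_neg_eq_zero hlam hsing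
  obtain ⟨t, ht, hnonneg, i₀, hi₀⟩ :=
    exists_pos_forall_sub_mul_nonneg_and_exists_eq_zero hpos hp
  refine ⟨vstar - t • p, ?_, fun i => ⟨hnonneg i, ?_⟩, i₀, hi₀⟩
  · rw [mulVec_sub, hsol, mulVec_smul, hpA, smul_zero, sub_zero]
  · have := mul_pos ht (hp i)
    simp only [Pi.sub_apply, Pi.smul_apply, smul_eq_mul]
    linarith [hub i]

theorem stmt2 (n : ℕ) (vbar : ℝ) (hvbar : 0 < vbar)
    (lam b : Fin n → ℝ) (hlam : ∀ i, 0 ≤ lam i)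
    (A : Matrix (Fin n) (Fin n) ℝ)
    (hA : A = Matrix.of fun i j => if i = j then 1 else -lam j)
    (hsing : A.det = 0)
    (vstar : Fin n → ℝ) (hsol : A.mulVec vstar = b)
    (hpos : ∀ i, 0 < vstar i) (hub : ∀ i, vstar i ≤ vbar) :
    ∃ w : Fin n → ℝ, A.mulVec w = b ∧ (∀ i, 0 ≤ w i ∧ w i ≤ vbar) ∧ ∃ i, w i = 0 :=
  stmt2_general n vbar lam b hlam A hA hsing vstar hsol hpos hub
end

section
/- Let A be the n×n matrix with a_{ii}=1 and a_{ij}=-λ_j for i≠j, where λ_i ≥ 0 for all i. If Σ_{i=1}^n λ_i/(1+λ_i) < 1 (so A is invertible), then all entries of A^{-1} are nonnegative. -/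
/-!
Write `A = diagonal (1 + λ) - 1 λᵀ`, a rank-one perturbation of a positive diagonal matrix.
The Sherman–Morrison formula gives
`A⁻¹ = D⁻¹ + (1 - s)⁻¹ (D⁻¹ 1) (λᵀ D⁻¹)` with `D = diagonal (1 + λ)` and `s = ∑ λᵢ / (1 + λᵢ)`,
and when `s < 1` both summands are entrywise nonnegative.
-/

open Matrix

namespace Matrix

variable {n K : Type*} [Fintype n] [DecidableEq n] [Field K]

theorem inv_sub_vecMulVec_of_mul_eq_one {M N : Matrix n n K} (hMN : M * N = 1) (u v : n → K)
    (h : 1 - v ⬝ᵥ (N *ᵥ u) ≠ 0) :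
    (M - vecMulVec u v)⁻¹ = N + (1 - v ⬝ᵥ (N *ᵥ u))⁻¹ • vecMulVec (N *ᵥ u) (v ᵥ* N) := by
  refine inv_eq_right_inv ?_
  have hc := mul_inv_cancel₀ h
  rw [sub_mul, mul_add, mul_add, hMN, Matrix.mul_smul, Matrix.mul_smul, mul_vecMulVec,
    mulVec_mulVec, hMN, one_mulVec, vecMulVec_mul, vecMulVec_mul_vecMulVec, vecMulVec_smul]
  linear_combination (norm := module) hc • vecMulVec u (v ᵥ* N)

theorem inv_diagonal_sub_vecMulVec_nonneg [LinearOrder K] [IsStrictOrderedRing K]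
    {d u v : n → K} (hd : ∀ i, 0 < d i) (hu : 0 ≤ u) (hv : 0 ≤ v)
    (h : ∑ i, v i * u i / d i < 1) (i j : n) :
    0 ≤ (diagonal d - vecMulVec u v)⁻¹ i j := by
  have hdd : diagonal d * diagonal d⁻¹ = 1 := by
    rw [diagonal_mul_diagonal, ← diagonal_one]
    exact congrArg diagonal (funext fun i => mul_inv_cancel₀ (hd i).ne')
  have hs : v ⬝ᵥ (diagonal d⁻¹ *ᵥ u) = ∑ i, v i * u i / d i := by
    simp only [dotProduct, mulVec_diagonal, Pi.inv_apply]
    exact Finset.sum_congr rfl fun i _ => by ring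
  rw [inv_sub_vecMulVec_of_mul_eq_one hdd u v (by rw [hs]; linarith)]
  have hc : 0 ≤ (1 - v ⬝ᵥ (diagonal d⁻¹ *ᵥ u))⁻¹ := by
    rw [hs]
    exact inv_nonneg.mpr (by linarith)
  have hdi : ∀ k, 0 ≤ (d k)⁻¹ := fun k => inv_nonneg.mpr (hd k).le
  simp only [add_apply, smul_apply, vecMulVec_apply, mulVec_diagonal, vecMul_diagonal,
    diagonal_apply, Pi.inv_apply, smul_eq_mul]
  refine add_nonneg ?_ (mul_nonneg hc (mul_nonneg (mul_nonneg (hdi i) (hu i))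
    (mul_nonneg (hv j) (hdi j))))
  split_ifs
  exacts [hdi i, le_rfl]

end Matrix

theorem stmt3 (n : ℕ) (lam : Fin n → ℝ) (hlam : ∀ i, 0 ≤ lam i)
    (h : ∑ i, lam i / (1 + lam i) < 1)
    (A : Matrix (Fin n) (Fin n) ℝ)
    (hA : A = Matrix.of fun i j => if i = j then 1 else -lam j) :
    ∀ i j, 0 ≤ A⁻¹ i j := by
  have hA_rankOne : A = diagonal (1 + lam) - vecMulVec 1 lam := by
    ext i j
    by_cases hij : i = j <;> simp [hA, hij]
  rw [hA_rankOne]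
  exact inv_diagonal_sub_vecMulVec_nonneg (fun i => add_pos_of_pos_of_nonneg one_pos (hlam i))
    zero_le_one hlam (by simpa using h)
end

section
/- Let A be the n×n matrix with a_{ii}=1 and a_{ij}=-λ_j for i≠j, with λ_i ≥ 0 and Σ_{i=1}^n λ_i/(1+λ_i) ≠ 1. If v* is the unique solution of Av = b, then λ·v* = (Σ_{i=1}^n (λ_i/(1+λ_i)) b_i) / (1 - Σ_{i=1}^n λ_i/(1+λ_i)). -/
open Matrix Finset

variable {K ι : Type*} [Field K] [Fintype ι] [DecidableEq ι]

lemma mulVec_of_ite_one_neg_apply (lam v : ι → K) (i : ι) :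
    ((Matrix.of fun i j => if i = j then 1 else -lam j) *ᵥ v) i
      = (1 + lam i) * v i - ∑ j, lam j * v j := by
  have hsplit : ∀ j, (if i = j then 1 else -lam j) * v j
      = (if i = j then (1 + lam j) * v j else 0) - lam j * v j := by
    intro j
    split_ifs <;> ring
  simp only [mulVec, dotProduct, of_apply, hsplit, sum_sub_distrib, sum_ite_eq]
  simp

/-- Solving the `i`-th equation for `v i` expresses `lam ⬝ᵥ v` as a fixed point of an affine map. -/
lemma sum_mul_eq_of_mulVec_eq {lam v b : ι → K} (hlam : ∀ i, 1 + lam i ≠ 0)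
    (hv : (Matrix.of fun i j => if i = j then 1 else -lam j) *ᵥ v = b) :
    ∑ i, lam i * v i
      = ∑ i, lam i / (1 + lam i) * b i + (∑ i, lam i / (1 + lam i)) * ∑ i, lam i * v i := by
  set S := ∑ i, lam i * v i
  have hterm : ∀ i, lam i * v i = lam i / (1 + lam i) * b i + lam i / (1 + lam i) * S := by
    intro i
    have hi : (1 + lam i) * v i - S = b i := by
      rw [← hv, mulVec_of_ite_one_neg_apply]
    field_simp [hlam i]
    linear_combination lam i * hi
  rw [sum_mul, ← sum_add_distrib]
  exact sum_congr rfl fun i _ => hterm i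

theorem stmt4_general (n : ℕ) (lam b : Fin n → ℝ) (hlam : ∀ i, 0 ≤ lam i)
    (h : ∑ i, lam i / (1 + lam i) ≠ 1)
    (A : Matrix (Fin n) (Fin n) ℝ)
    (hA : A = Matrix.of fun i j => if i = j then 1 else -lam j)
    (vstar : Fin n → ℝ) (hsol : A.mulVec vstar = b) :
    ∑ i, lam i * vstar i =
      (∑ i, lam i / (1 + lam i) * b i) / (1 - ∑ i, lam i / (1 + lam i)) := by
  subst hA
  have hfix := sum_mul_eq_of_mulVec_eq (fun i => by linarith [hlam i]) hsol
  rw [eq_div_iff (sub_ne_zero.2 h.symm)]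
  linear_combination hfix

theorem stmt4 (n : ℕ) (lam b : Fin n → ℝ) (hlam : ∀ i, 0 ≤ lam i)
    (h : ∑ i, lam i / (1 + lam i) ≠ 1)
    (A : Matrix (Fin n) (Fin n) ℝ)
    (hA : A = Matrix.of fun i j => if i = j then 1 else -lam j)
    (vstar : Fin n → ℝ) (hsol : A.mulVec vstar = b)
    (huniq : ∀ w, A.mulVec w = b → w = vstar) :
    ∑ i, lam i * vstar i =
      (∑ i, lam i / (1 + lam i) * b i) / (1 - ∑ i, lam i / (1 + lam i)) :=
  stmt4_general n lam b hlam h A hA vstar hsol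
end

section
/- Fix v̄ > 0, an index i, a vector χ* ∈ ℝ^{n-1} with nonnegative entries, and v* ∈ [0,v̄]^n such that v*_i + χ*·(v̄·1 - v*_{-i}) ≤ v̄, where 1 is the all-ones vector of length n-1. Let I = {j : v*_j < v̄}. Then for every v_{-i} ∈ [0,v̄]^{n-1}: max{v*_i + χ*·(v_{-i} - v*_{-i}), 0} ≤ v*_i + (v̄ - v*_i)·max{0, max_{j ∈ I, j≠i} (v_j - v*_j)/(v̄ - v*_j)}. -/
/-! Each coordinate increment `v j - v*_j` is at most `M (v̄ - v*_j)`, where `M ≥ 0` is the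
maximal normalized increment (for `v*_j = v̄` the increment is nonpositive). Weighting by
`χ* ≥ 0` and summing, `χ*·(v_{-i} - v*_{-i}) ≤ M χ*·(v̄ - v*_{-i}) ≤ M (v̄ - v*_i)`; the right-hand
side is also nonnegative, so it dominates the truncation at `0` as well. -/

theorem sub_le_mul_sub_of_div_le {a b c M : ℝ} (ha : a ≤ c) (hb : b ≤ c)
    (hdiv : b < c → (a - b) / (c - b) ≤ M) : a - b ≤ M * (c - b) := by
  rcases hb.lt_or_eq with hbc | rfl
  · exact (div_le_iff₀ (sub_pos.2 hbc)).1 (hdiv hbc)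
  · simpa using sub_nonpos.2 ha

theorem Finset.sum_mul_le_mul_sum_mul {ι : Type*} {s : Finset ι} {w x d : ι → ℝ} {M : ℝ}
    (hw : ∀ j ∈ s, 0 ≤ w j) (hx : ∀ j ∈ s, x j ≤ M * d j) :
    ∑ j ∈ s, w j * x j ≤ M * ∑ j ∈ s, w j * d j := by
  rw [Finset.mul_sum]
  refine Finset.sum_le_sum fun j hj => ?_
  calc w j * x j ≤ w j * (M * d j) := mul_le_mul_of_nonneg_left (hx j hj) (hw j hj)
    _ = M * (w j * d j) := by ring

theorem stmt7_general (n : ℕ) (vbar : ℝ) (i : Fin n)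
    (chi : Fin n → ℝ) (hchi : ∀ j, j ≠ i → 0 ≤ chi j)
    (vstar : Fin n → ℝ) (hvs : ∀ j, 0 ≤ vstar j ∧ vstar j ≤ vbar)
    (hcond : vstar i + ∑ j ∈ Finset.univ.erase i, chi j * (vbar - vstar j) ≤ vbar)
    (v : Fin n → ℝ) (hv : ∀ j, 0 ≤ v j ∧ v j ≤ vbar) :
    max (vstar i + ∑ j ∈ Finset.univ.erase i, chi j * (v j - vstar j)) 0 ≤
      vstar i + (vbar - vstar i) *
        (((Finset.univ.erase i).filter (fun j => vstar j < vbar)).fold max 0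
          (fun j => (v j - vstar j) / (vbar - vstar j))) := by
  set M := ((Finset.univ.erase i).filter (fun j => vstar j < vbar)).fold max 0
    (fun j => (v j - vstar j) / (vbar - vstar j))
  have hM : 0 ≤ M := (Finset.le_fold_max _).2 (Or.inl le_rfl)
  have hincr : ∀ j ∈ Finset.univ.erase i, v j - vstar j ≤ M * (vbar - vstar j) :=
    fun j hj => sub_le_mul_sub_of_div_le (hv j).2 (hvs j).2 fun hj' =>
      (Finset.le_fold_max _).2 (Or.inr ⟨j, Finset.mem_filter.2 ⟨hj, hj'⟩, le_rfl⟩)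
  have hsum := Finset.sum_mul_le_mul_sum_mul
    (fun j hj => hchi j (Finset.ne_of_mem_erase hj)) hincr
  have hgap : 0 ≤ vbar - vstar i := sub_nonneg.2 (hvs i).2
  refine max_le ?_ ?_
  · nlinarith
  · nlinarith [(hvs i).1]

theorem stmt7 (n : ℕ) (vbar : ℝ) (hvbar : 0 < vbar) (i : Fin n)
    (chi : Fin n → ℝ) (hchi : ∀ j, j ≠ i → 0 ≤ chi j)
    (vstar : Fin n → ℝ) (hvs : ∀ j, 0 ≤ vstar j ∧ vstar j ≤ vbar)
    (hcond : vstar i + ∑ j ∈ Finset.univ.erase i, chi j * (vbar - vstar j) ≤ vbar)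
    (v : Fin n → ℝ) (hv : ∀ j, 0 ≤ v j ∧ v j ≤ vbar) :
    max (vstar i + ∑ j ∈ Finset.univ.erase i, chi j * (v j - vstar j)) 0 ≤
      vstar i + (vbar - vstar i) *
        (((Finset.univ.erase i).filter (fun j => vstar j < vbar)).fold max 0
          (fun j => (v j - vstar j) / (vbar - vstar j))) :=
  stmt7_general n vbar i chi hchi vstar hvs hcond v hv
end

section
/- Fix v̄ > 0 and m ∈ (0,v̄)^n with Σ_{i=1}^n √(1 - m_i/v̄) > n - 1. Then the vector λ* with λ*_i = √(v̄/(v̄ - m_i)) - 1 is the unique maximizer of f(λ) = Σ_{i=1}^n (m_i λ_i - λ_i² v̄/(1+λ_i)) over the set {λ ∈ ℝ^n : λ ≥ 0, Σ_{i=1}^n λ_i/(1+λ_i) ≤ 1}. -/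
/-!
Writing `c = √(v̄ / (v̄ - m))`, i.e. `m = v̄ - v̄ / c²`, each summand of the objective completes to
`g(c - 1) - g(x) = v̄ (c - 1 - x)² / (c² (1 + x))`, so `λ*` maximizes every summand separately and is
the only maximizer over `λ > -1`. The low-means condition is exactly `Σ λ*ᵢ / (1 + λ*ᵢ) ≤ 1`,
because `λ*ᵢ / (1 + λ*ᵢ) = 1 - 1 / c = 1 - √(1 - mᵢ / v̄)`.
-/

open Real Finset

noncomputable def objective (v m x : ℝ) : ℝ := m * x - x ^ 2 * v / (1 + x)

section Coordinate

variable {v m c x : ℝ}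

theorem objective_sub_one_sub_objective (hc : c ≠ 0) (hx : 1 + x ≠ 0) :
    objective v (v - v / c ^ 2) (c - 1) - objective v (v - v / c ^ 2) x
      = v * (c - (1 + x)) ^ 2 / (c ^ 2 * (1 + x)) := by
  unfold objective
  rw [show 1 + (c - 1) = c by ring]
  field_simp
  ring

theorem objective_le_objective_sub_one (hv : 0 ≤ v) (hc : 0 < c) (hx : -1 < x) :
    objective v (v - v / c ^ 2) x ≤ objective v (v - v / c ^ 2) (c - 1) := by
  have hx' : 0 < 1 + x := by linarith
  have key := objective_sub_one_sub_objective (v := v) hc.ne' hx'.ne'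
  have : 0 ≤ v * (c - (1 + x)) ^ 2 / (c ^ 2 * (1 + x)) := by positivity
  linarith

theorem objective_eq_objective_sub_one_iff (hv : 0 < v) (hc : 0 < c) (hx : -1 < x) :
    objective v (v - v / c ^ 2) x = objective v (v - v / c ^ 2) (c - 1) ↔ x = c - 1 := by
  have hx' : 0 < 1 + x := by linarith
  rw [eq_comm, ← sub_eq_zero, objective_sub_one_sub_objective hc.ne' hx'.ne', div_eq_zero_iff, mul_eq_zero, or_iff_right hv.ne', or_iff_left (by positivity),
    sq_eq_zero_iff, sub_eq_zero]
  constructor <;> intro h <;> linarith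

theorem sub_div_sq_sqrt_div_sub (hv : 0 < v) (hm : m < v) : v - v / √(v / (v - m)) ^ 2 = m := by
  have hvm : 0 < v - m := sub_pos.2 hm
  rw [sq_sqrt (by positivity)]
  field_simp
  ring

theorem objective_le_objective_sqrt (hv : 0 < v) (hm : m < v) (hx : -1 < x) :
    objective v m x ≤ objective v m (√(v / (v - m)) - 1) := by
  have hc : 0 < √(v / (v - m)) := sqrt_pos.2 (div_pos hv (sub_pos.2 hm))
  have hm' := sub_div_sq_sqrt_div_sub hv hm
  generalize √(v / (v - m)) = c at hc hm' ⊢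
  subst hm'
  exact objective_le_objective_sub_one hv.le hc hx

theorem objective_eq_objective_sqrt_iff (hv : 0 < v) (hm : m < v) (hx : -1 < x) :
    objective v m x = objective v m (√(v / (v - m)) - 1) ↔ x = √(v / (v - m)) - 1 := by
  have hc : 0 < √(v / (v - m)) := sqrt_pos.2 (div_pos hv (sub_pos.2 hm))
  have hm' := sub_div_sq_sqrt_div_sub hv hm
  generalize √(v / (v - m)) = c at hc hm' ⊢
  subst hm'
  exact objective_eq_objective_sub_one_iff hv hc hx

theorem one_le_sqrt_div_sub (hm₀ : 0 ≤ m) (hm : m < v) : 1 ≤ √(v / (v - m)) := by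
  rw [one_le_sqrt, one_le_div (sub_pos.2 hm)]
  linarith

theorem sqrt_sub_one_div_one_add (hv : 0 < v) (hm : m < v) :
    (√(v / (v - m)) - 1) / (1 + (√(v / (v - m)) - 1)) = 1 - √(1 - m / v) := by
  have hvm : 0 < v - m := sub_pos.2 hm
  have hc : 0 < √(v / (v - m)) := sqrt_pos.2 (by positivity)
  have hinv : (√(v / (v - m)))⁻¹ = √(1 - m / v) := by
    rw [← sqrt_inv, inv_div]
    congr 1
    field_simp
  rw [show 1 + (√(v / (v - m)) - 1) = √(v / (v - m)) by ring, sub_div, div_self hc.ne', one_div,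
    hinv]

end Coordinate

section Sum

variable {ι : Type*} [Fintype ι] {v : ℝ} {m : ι → ℝ}

theorem sum_objective_le_sum_objective_sqrt (hv : 0 < v) (hm : ∀ i, m i < v) {lam : ι → ℝ}
    (hlam : ∀ i, -1 < lam i) :
    ∑ i, objective v (m i) (lam i) ≤ ∑ i, objective v (m i) (√(v / (v - m i)) - 1) :=
  sum_le_sum fun i _ => objective_le_objective_sqrt hv (hm i) (hlam i)

theorem eq_of_sum_objective_eq_sum_objective_sqrt (hv : 0 < v) (hm : ∀ i, m i < v)
    {lam : ι → ℝ} (hlam : ∀ i, -1 < lam i)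
    (heq : ∑ i, objective v (m i) (lam i) = ∑ i, objective v (m i) (√(v / (v - m i)) - 1)) :
    lam = fun i => √(v / (v - m i)) - 1 := by
  rw [sum_eq_sum_iff_of_le fun i _ => objective_le_objective_sqrt hv (hm i) (hlam i)] at heq
  funext i
  exact (objective_eq_objective_sqrt_iff hv (hm i) (hlam i)).1 (heq i (mem_univ i))

theorem sum_sqrt_sub_one_div_one_add (hv : 0 < v) (hm : ∀ i, m i < v) :
    ∑ i, (√(v / (v - m i)) - 1) / (1 + (√(v / (v - m i)) - 1))
      = Fintype.card ι - ∑ i, √(1 - m i / v) := by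
  simp only [sqrt_sub_one_div_one_add hv (hm _), sum_sub_distrib, sum_const, card_univ,
    nsmul_eq_mul, mul_one]

end Sum

theorem stmt9 (n : ℕ) (vbar : ℝ) (hvbar : 0 < vbar)
    (m : Fin n → ℝ) (hm : ∀ i, 0 < m i ∧ m i < vbar)
    (hlow : (n : ℝ) - 1 < ∑ i, Real.sqrt (1 - m i / vbar)) :
    let f : (Fin n → ℝ) → ℝ := fun lam => ∑ i, (m i * lam i - lam i ^ 2 * vbar / (1 + lam i))
    let lamstar : Fin n → ℝ := fun i => Real.sqrt (vbar / (vbar - m i)) - 1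
    ((∀ i, 0 ≤ lamstar i) ∧ ∑ i, lamstar i / (1 + lamstar i) ≤ 1) ∧
    ∀ lam : Fin n → ℝ, (∀ i, 0 ≤ lam i) → (∑ i, lam i / (1 + lam i)) ≤ 1 →
      f lam ≤ f lamstar ∧ (f lam = f lamstar → lam = lamstar) := by
  intro f lamstar
  have hlt : ∀ i, m i < vbar := fun i => (hm i).2
  refine ⟨⟨fun i => sub_nonneg.2 (one_le_sqrt_div_sub (hm i).1.le (hlt i)), ?_⟩, ?_⟩
  · have := sum_sqrt_sub_one_div_one_add hvbar hlt
    rw [Fintype.card_fin] at this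
    simp only [lamstar, this]
    linarith
  · intro lam hlam _
    have hlam' : ∀ i, -1 < lam i := fun i => by linarith [hlam i]
    exact ⟨sum_objective_le_sum_objective_sqrt hvbar hlt hlam',
      eq_of_sum_objective_eq_sum_objective_sqrt hvbar hlt hlam'⟩
end

section
/- Fix v̄ > 0, m ∈ (0,v̄)^n, and λ ∈ ℝ^n with λ ≥ 0 and Σ_{i=1}^n λ_i/(1+λ_i) ≥ 1. Then max_{r ∈ [0,v̄]^n} R(r,λ) = λ·m + v̄(1 - Σ_{i=1}^n λ_i), where R(r,λ) = λ·m + min{v̄(1-Σλ_i), min_i (r_i - Σ_{j≠i} λ_j r_j - λ_i v̄), -λ·r} if r > 0 componentwise, and R(r,λ) = λ·m + min{v̄(1-Σλ_i), min_i (r_i - Σ_{j≠i} λ_j r_j - λ_i v̄)} otherwise. -/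
/-!
The bound is immediate, since `R(r, λ)` is a minimum one of whose terms is `v̄ (1 - Σ λᵢ)`.
It is attained at `rᵢ = λᵢ v̄ / (1 + λᵢ)`: there `(1 + λᵢ) rᵢ = λᵢ v̄`, so every corner term
`rᵢ - Σ_{j ≠ i} λⱼ rⱼ - λᵢ v̄` collapses to `-λ·r`, and
`λ·r = v̄ (Σ λᵢ - Σ λᵢ / (1 + λᵢ)) ≤ v̄ (Σ λᵢ - 1)`, so all other terms of the minimum are at
least `v̄ (1 - Σ λᵢ)`.
-/

open Finset

section BalancedReserve

variable {ι : Type*}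

lemma sub_sum_erase_mul_sub [Fintype ι] [DecidableEq ι] (lam r : ι → ℝ) (c : ℝ) (i : ι) :
    r i - ∑ j ∈ univ.erase i, lam j * r j - lam i * c
      = (1 + lam i) * r i - lam i * c - ∑ j, lam j * r j := by
  rw [sum_erase_eq_sub (mem_univ i)]
  ring

noncomputable def balancedReserve (lam : ι → ℝ) (vbar : ℝ) (i : ι) : ℝ :=
  lam i * vbar / (1 + lam i)

lemma balancedReserve_mem_Icc {lam : ι → ℝ} {vbar : ℝ} (hvbar : 0 ≤ vbar) {i : ι}
    (hlam : 0 ≤ lam i) : balancedReserve lam vbar i ∈ Set.Icc 0 vbar := by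
  have hpos : 0 < 1 + lam i := by linarith
  refine ⟨by unfold balancedReserve; positivity, ?_⟩
  rw [balancedReserve, div_le_iff₀ hpos]
  nlinarith

lemma one_add_mul_balancedReserve {lam : ι → ℝ} (vbar : ℝ) {i : ι} (h : 1 + lam i ≠ 0) :
    (1 + lam i) * balancedReserve lam vbar i = lam i * vbar := by
  rw [balancedReserve]
  field_simp

lemma sum_mul_balancedReserve [Fintype ι] {lam : ι → ℝ} (vbar : ℝ) (h : ∀ i, 1 + lam i ≠ 0) :
    ∑ i, lam i * balancedReserve lam vbar i
      = vbar * (∑ i, lam i - ∑ i, lam i / (1 + lam i)) := by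
  rw [← sum_sub_distrib, mul_sum]
  refine sum_congr rfl fun i _ => ?_
  rw [balancedReserve]
  field_simp [h i]
  ring

lemma balancedReserve_corner [Fintype ι] [DecidableEq ι] {lam : ι → ℝ} (vbar : ℝ)
    (h : ∀ i, 1 + lam i ≠ 0) (i : ι) :
    balancedReserve lam vbar i - ∑ j ∈ univ.erase i, lam j * balancedReserve lam vbar j
        - lam i * vbar
      = -∑ j, lam j * balancedReserve lam vbar j := by
  rw [sub_sum_erase_mul_sub, one_add_mul_balancedReserve vbar (h i)]
  ring

lemma le_neg_sum_mul_balancedReserve [Fintype ι] {lam : ι → ℝ} {vbar : ℝ} (hvbar : 0 ≤ vbar)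
    (hlam : ∀ i, 0 ≤ lam i) (hgeq : 1 ≤ ∑ i, lam i / (1 + lam i)) :
    vbar * (1 - ∑ i, lam i) ≤ -∑ i, lam i * balancedReserve lam vbar i := by
  rw [sum_mul_balancedReserve vbar fun i => by linarith [hlam i]]
  nlinarith

end BalancedReserve

theorem stmt11_general (n : ℕ) (hn : 0 < n) (vbar : ℝ) (hvbar : 0 < vbar)
    (m lam : Fin n → ℝ)
    (hlam : ∀ i, 0 ≤ lam i)
    (hgeq : 1 ≤ ∑ i, lam i / (1 + lam i)) :
    IsGreatest
      {x : ℝ | ∃ r : Fin n → ℝ, (∀ i, 0 ≤ r i ∧ r i ≤ vbar) ∧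
        x = (∑ i, lam i * m i) +
          (if ∀ i, 0 < r i then
            min (min (vbar * (1 - ∑ i, lam i))
              (Finset.univ.inf' (Finset.univ_nonempty_iff.mpr (Fin.pos_iff_nonempty.mp hn))
                (fun i => r i - (∑ j ∈ Finset.univ.erase i, lam j * r j) - lam i * vbar)))
            (-(∑ i, lam i * r i))
          else
            min (vbar * (1 - ∑ i, lam i))
              (Finset.univ.inf' (Finset.univ_nonempty_iff.mpr (Fin.pos_iff_nonempty.mp hn))
                (fun i => r i - (∑ j ∈ Finset.univ.erase i, lam j * r j) - lam i * vbar)))}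
      ((∑ i, lam i * m i) + vbar * (1 - ∑ i, lam i)) := by
  refine ⟨⟨balancedReserve lam vbar, fun i => balancedReserve_mem_Icc hvbar.le (hlam i), ?_⟩, ?_⟩
  · have hcorner := balancedReserve_corner (lam := lam) vbar fun i => by linarith [hlam i]
    have hle := le_neg_sum_mul_balancedReserve hvbar.le hlam hgeq
    have hinf : ∀ hs : (univ : Finset (Fin n)).Nonempty, vbar * (1 - ∑ i, lam i) ≤ univ.inf' hs
        fun i => balancedReserve lam vbar i
          - ∑ j ∈ univ.erase i, lam j * balancedReserve lam vbar j - lam i * vbar :=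
      fun hs => le_inf' hs _ fun i _ => (hcorner i).symm ▸ hle
    split_ifs
    · rw [min_eq_left (hinf _), min_eq_left hle]
    · rw [min_eq_left (hinf _)]
  · rintro x ⟨r, -, rfl⟩
    gcongr
    split_ifs
    · exact (min_le_left _ _).trans (min_le_left _ _)
    · exact min_le_left _ _

theorem stmt11 (n : ℕ) (hn : 0 < n) (vbar : ℝ) (hvbar : 0 < vbar)
    (m lam : Fin n → ℝ) (hm : ∀ i, 0 < m i ∧ m i < vbar)
    (hlam : ∀ i, 0 ≤ lam i)
    (hgeq : 1 ≤ ∑ i, lam i / (1 + lam i)) :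
    IsGreatest
      {x : ℝ | ∃ r : Fin n → ℝ, (∀ i, 0 ≤ r i ∧ r i ≤ vbar) ∧
        x = (∑ i, lam i * m i) +
          (if ∀ i, 0 < r i then
            min (min (vbar * (1 - ∑ i, lam i))
              (Finset.univ.inf' (Finset.univ_nonempty_iff.mpr (Fin.pos_iff_nonempty.mp hn))
                (fun i => r i - (∑ j ∈ Finset.univ.erase i, lam j * r j) - lam i * vbar)))
            (-(∑ i, lam i * r i))
          else
            min (vbar * (1 - ∑ i, lam i))
              (Finset.univ.inf' (Finset.univ_nonempty_iff.mpr (Fin.pos_iff_nonempty.mp hn))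
                (fun i => r i - (∑ j ∈ Finset.univ.erase i, lam j * r j) - lam i * vbar)))}
      ((∑ i, lam i * m i) + vbar * (1 - ∑ i, lam i)) :=
  stmt11_general n hn vbar hvbar m lam hlam hgeq
end

section
/- Fix v̄ > 0 and λ ∈ ℝ^n with λ ≥ 0 and Σ_{i=1}^n λ_i/(1+λ_i) ≤ 1. Define r*_i = λ_i v̄/(1+λ_i) and g(r) = min{min_i (r_i - Σ_{j≠i} λ_j r_j - λ_i v̄), -λ·r}. Then r* maximizes g over [0,v̄]^n, with optimal value g(r*) = -Σ_{i=1}^n λ_i² v̄/(1+λ_i). -/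
/-!
With weights `w i = λ i / (1 + λ i)`, which are nonnegative and sum to at most `1`, the
combination `∑ w i · (r i - ∑_{j ≠ i} λ j r j - λ i v̄) + (1 - ∑ w i) · (-λ·r)` of the terms
in the minimum defining `g r` is the constant `-∑ λ i² v̄ / (1 + λ i)`, independently of `r`.
A minimum is at most any convex combination of its terms, so `g r` is bounded by this constant,
and at `r*` every term equals it.
-/

open Finset

theorem le_sum_mul_add_one_sub_mul {ι : Type*} (s : Finset ι) {w a : ι → ℝ} {m b : ℝ}
    (hw : ∀ i ∈ s, 0 ≤ w i) (hW : ∑ i ∈ s, w i ≤ 1) (ha : ∀ i ∈ s, m ≤ a i) (hb : m ≤ b) :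
    m ≤ ∑ i ∈ s, w i * a i + (1 - ∑ i ∈ s, w i) * b :=
  calc m = ∑ i ∈ s, w i * m + (1 - ∑ i ∈ s, w i) * m := by rw [← sum_mul]; ring
    _ ≤ ∑ i ∈ s, w i * a i + (1 - ∑ i ∈ s, w i) * b :=
      add_le_add (sum_le_sum fun i hi => mul_le_mul_of_nonneg_left (ha i hi) (hw i hi))
        (mul_le_mul_of_nonneg_left hb (sub_nonneg.2 hW))

theorem sum_mul_div_one_add {ι : Type*} [Fintype ι] {lam : ι → ℝ} (hlam : ∀ i, 1 + lam i ≠ 0)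
    (v : ℝ) :
    ∑ i, lam i * (lam i * v / (1 + lam i)) = ∑ i, lam i ^ 2 * v / (1 + lam i) :=
  sum_congr rfl fun i _ => by field_simp [hlam i]

section CornerTerm

variable {ι : Type*} [Fintype ι] [DecidableEq ι]

def cornerTerm (lam : ι → ℝ) (v : ℝ) (r : ι → ℝ) (i : ι) : ℝ :=
  r i - ∑ j ∈ univ.erase i, lam j * r j - lam i * v

theorem cornerTerm_eq (lam : ι → ℝ) (v : ℝ) (r : ι → ℝ) (i : ι) :
    cornerTerm lam v r i = (1 + lam i) * r i - ∑ j, lam j * r j - lam i * v := by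
  rw [cornerTerm, sum_erase_eq_sub (mem_univ i)]
  ring

theorem sum_div_one_add_mul_cornerTerm_add {lam : ι → ℝ} (hlam : ∀ i, 1 + lam i ≠ 0)
    (v : ℝ) (r : ι → ℝ) :
    ∑ i, lam i / (1 + lam i) * cornerTerm lam v r i
        + (1 - ∑ i, lam i / (1 + lam i)) * -∑ i, lam i * r i
      = -∑ i, lam i ^ 2 * v / (1 + lam i) := by
  have hterm : ∀ i, lam i / (1 + lam i) * cornerTerm lam v r i
      = lam i * r i - lam i / (1 + lam i) * ∑ j, lam j * r j - lam i ^ 2 * v / (1 + lam i) := by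
    intro i
    rw [cornerTerm_eq]
    field_simp [hlam i]
  simp_rw [hterm]
  rw [sum_sub_distrib, sum_sub_distrib, ← sum_mul]
  ring

theorem cornerTerm_div_one_add {lam : ι → ℝ} (hlam : ∀ i, 1 + lam i ≠ 0) (v : ℝ) (i : ι) :
    cornerTerm lam v (fun j => lam j * v / (1 + lam j)) i
      = -∑ j, lam j ^ 2 * v / (1 + lam j) := by
  rw [cornerTerm_eq, sum_mul_div_one_add hlam, mul_div_cancel₀ _ (hlam i)]
  ring

end CornerTerm

theorem stmt12_general (n : ℕ) (hn : 0 < n) (vbar : ℝ)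
    (lam : Fin n → ℝ) (hlam : ∀ i, 0 ≤ lam i)
    (hgeom : ∑ i, lam i / (1 + lam i) ≤ 1) :
    let g : (Fin n → ℝ) → ℝ := fun r =>
      min
        (Finset.univ.inf' (Finset.univ_nonempty_iff.mpr (Fin.pos_iff_nonempty.mp hn))
          (fun i => r i - (∑ j ∈ Finset.univ.erase i, lam j * r j) - lam i * vbar))
        (-(∑ i, lam i * r i))
    let rstar : Fin n → ℝ := fun i => lam i * vbar / (1 + lam i)
    (∀ r : Fin n → ℝ, (∀ i, 0 ≤ r i ∧ r i ≤ vbar) → g r ≤ g rstar) ∧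
    g rstar = -(∑ i, lam i ^ 2 * vbar / (1 + lam i)) := by
  intro g rstar
  have hlam₁ : ∀ i, 1 + lam i ≠ 0 := fun i => by linarith [hlam i]
  have hg_star : g rstar = -∑ i, lam i ^ 2 * vbar / (1 + lam i) := by
    have hterms : cornerTerm lam vbar rstar = fun _ => -∑ i, lam i ^ 2 * vbar / (1 + lam i) :=
      funext (cornerTerm_div_one_add hlam₁ vbar)
    change min (univ.inf' _ (cornerTerm lam vbar rstar)) _ = _
    rw [hterms, inf'_const, sum_mul_div_one_add hlam₁, min_self]
  refine ⟨fun r _ => ?_, hg_star⟩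
  rw [hg_star, ← sum_div_one_add_mul_cornerTerm_add hlam₁ vbar r]
  exact le_sum_mul_add_one_sub_mul univ
    (fun i _ => div_nonneg (hlam i) (by linarith [hlam i])) hgeom
    (fun i _ => (min_le_left _ _).trans (inf'_le _ (mem_univ i))) (min_le_right _ _)

theorem stmt12 (n : ℕ) (hn : 0 < n) (vbar : ℝ) (hvbar : 0 < vbar)
    (lam : Fin n → ℝ) (hlam : ∀ i, 0 ≤ lam i)
    (hgeom : ∑ i, lam i / (1 + lam i) ≤ 1) :
    let g : (Fin n → ℝ) → ℝ := fun r =>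
      min
        (Finset.univ.inf' (Finset.univ_nonempty_iff.mpr (Fin.pos_iff_nonempty.mp hn))
          (fun i => r i - (∑ j ∈ Finset.univ.erase i, lam j * r j) - lam i * vbar))
        (-(∑ i, lam i * r i))
    let rstar : Fin n → ℝ := fun i => lam i * vbar / (1 + lam i)
    (∀ r : Fin n → ℝ, (∀ i, 0 ≤ r i ∧ r i ≤ vbar) → g r ≤ g rstar) ∧
    g rstar = -(∑ i, lam i ^ 2 * vbar / (1 + lam i)) :=
  stmt12_general n hn vbar lam hlam hgeom
end

section
/- Suppose r_1, r_2 ∈ [0,1], v̄ = 1, and consider the two-bidder second-price-style worst-case revenue function R(r,λ) = λ_1 m_1 + λ_2 m_2 + min{1-λ_1-λ_2, r_1 - λ_2 r_2 - λ_1, r_2 - λ_1 r_1 - λ_2, -λ_1 r_1 - λ_2 r_2} for r > 0. If √(1-m_1) + √(1-m_2) > 1, then the unique maximizer over (r, λ) with λ ≥ 0 has r_i = 1 - √(1-m_i) and λ_i = 1/√(1-m_i) - 1. -/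
/-!
`R(r, λ)` is the Lagrangian dual of minimising revenue over joint value distributions on the four
profiles `{r₁, 1} × {r₂, 1}` with `E vᵢ ≥ mᵢ`, so every such distribution bounds `R(r, ·)` from
above (weak duality). Writing `sᵢ = √(1 - mᵢ)`, bidder `i` alone needs mass at least
`xᵢ = (mᵢ - rᵢ)⁺ / (1 - rᵢ)` at value `1`. If `x₁ + x₂ ≤ 1` these masses can be disjoint, giving
`R ≤ x₁ r₁ + x₂ r₂ ≤ (1 - s₁)² + (1 - s₂)²`, with equality only at `rᵢ = 1 - sᵢ`, where
complementary slackness pins down `λ`. Otherwise the masses overlap, and AM-GM bounds the revenue by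
`1 - 2 s₁ s₂`, which is strictly smaller because `(s₁ + s₂ - 1)² > 0`.
-/

noncomputable def dualRevenue (m1 m2 r1 r2 l1 l2 : ℝ) : ℝ :=
  l1 * m1 + l2 * m2 +
    min (min (1 - l1 - l2) (r1 - l2 * r2 - l1))
        (min (r2 - l1 * r1 - l2) (-(l1 * r1) - l2 * r2))

section WeakDuality

variable {m1 m2 r1 r2 l1 l2 : ℝ}

theorem dualRevenue_le_of_feasible {u1 u2 u3 : ℝ} (hl1 : 0 ≤ l1) (hl2 : 0 ≤ l2)
    (hu1 : 0 ≤ u1) (hu2 : 0 ≤ u2) (hu3 : 0 ≤ u3) (hu : u1 + u2 + u3 ≤ 1)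
    (hc1 : m1 ≤ u1 + u2 + (1 - u1 - u2) * r1) (hc2 : m2 ≤ u1 + u3 + (1 - u1 - u3) * r2) :
    dualRevenue m1 m2 r1 r2 l1 l2 ≤ u1 + u2 * r1 + u3 * r2 := by
  unfold dualRevenue
  set M := min (min (1 - l1 - l2) (r1 - l2 * r2 - l1))
    (min (r2 - l1 * r1 - l2) (-(l1 * r1) - l2 * r2))
  have hM1 : M ≤ 1 - l1 - l2 := (min_le_left _ _).trans (min_le_left _ _)
  have hM2 : M ≤ r1 - l2 * r2 - l1 := (min_le_left _ _).trans (min_le_right _ _)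
  have hM3 : M ≤ r2 - l1 * r1 - l2 := (min_le_right _ _).trans (min_le_left _ _)
  have hM0 : M ≤ -(l1 * r1) - l2 * r2 := (min_le_right _ _).trans (min_le_right _ _)
  -- the duality gap `u1 + u2 * r1 + u3 * r2 - R` is exactly the sum of these six products
  nlinarith [mul_nonneg hu1 (sub_nonneg.2 hM1), mul_nonneg hu2 (sub_nonneg.2 hM2),
    mul_nonneg hu3 (sub_nonneg.2 hM3), mul_nonneg (sub_nonneg.2 hu) (sub_nonneg.2 hM0),
    mul_nonneg hl1 (sub_nonneg.2 hc1), mul_nonneg hl2 (sub_nonneg.2 hc2)]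

theorem dualRevenue_complementary_slackness {x y : ℝ} (hl1 : 0 ≤ l1) (hl2 : 0 ≤ l2)
    (hx : 0 < x) (hy : 0 < y) (hxy : x + y < 1)
    (hc1 : m1 ≤ x + (1 - x) * r1) (hc2 : m2 ≤ y + (1 - y) * r2)
    (h : x * r1 + y * r2 ≤ dualRevenue m1 m2 r1 r2 l1 l2) :
    l1 * (1 - r1) = r1 ∧ l2 * (1 - r2) = r2 := by
  unfold dualRevenue at h
  set M := min (min (1 - l1 - l2) (r1 - l2 * r2 - l1))
    (min (r2 - l1 * r1 - l2) (-(l1 * r1) - l2 * r2))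
  have hM2 : M ≤ r1 - l2 * r2 - l1 := (min_le_left _ _).trans (min_le_right _ _)
  have hM3 : M ≤ r2 - l1 * r1 - l2 := (min_le_right _ _).trans (min_le_left _ _)
  have hM0 : M ≤ -(l1 * r1) - l2 * r2 := (min_le_right _ _).trans (min_le_right _ _)
  -- the duality gap, as in `dualRevenue_le_of_feasible`; each term is nonnegative, so each vanishes
  have hgap : (1 - x - y) * (-(l1 * r1) - l2 * r2 - M) + x * (r1 - l2 * r2 - l1 - M)
      + y * (r2 - l1 * r1 - l2 - M) + l1 * (x + (1 - x) * r1 - m1)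
      + l2 * (y + (1 - y) * r2 - m2) ≤ 0 := by
    linarith
  have k0 := mul_nonneg (by linarith : (0 : ℝ) ≤ 1 - x - y) (sub_nonneg.2 hM0)
  have kx := mul_nonneg hx.le (sub_nonneg.2 hM2)
  have ky := mul_nonneg hy.le (sub_nonneg.2 hM3)
  have kl1 := mul_nonneg hl1 (sub_nonneg.2 hc1)
  have kl2 := mul_nonneg hl2 (sub_nonneg.2 hc2)
  have e0 := nonpos_of_mul_nonpos_right
    (by linarith : (1 - x - y) * (-(l1 * r1) - l2 * r2 - M) ≤ 0) (by linarith : (0 : ℝ) < 1 - x - y)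
  have e2 := nonpos_of_mul_nonpos_right (by linarith : x * (r1 - l2 * r2 - l1 - M) ≤ 0) hx
  have e3 := nonpos_of_mul_nonpos_right (by linarith : y * (r2 - l1 * r1 - l2 - M) ≤ 0) hy
  constructor <;> linarith

end WeakDuality

-- At `r = 1` the division by zero makes this `0`.
noncomputable def cornerWeight (m r : ℝ) : ℝ := max 0 ((m - r) / (1 - r))

section CornerWeight

variable {m r s : ℝ}

theorem cornerWeight_nonneg : 0 ≤ cornerWeight m r := le_max_left _ _

theorem lt_one_of_cornerWeight_pos (hr : r ≤ 1) (h : 0 < cornerWeight m r) : r < 1 := by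
  refine hr.lt_of_ne fun hr1 => h.ne' ?_
  simp [cornerWeight, hr1]

theorem cornerWeight_le_one (hm : m ≤ 1) (hr : r ≤ 1) : cornerWeight m r ≤ 1 := by
  rcases hr.lt_or_eq with hr | rfl
  · exact max_le zero_le_one ((div_le_one (by linarith)).2 (by linarith))
  · simp [cornerWeight]

theorem cornerWeight_mul_one_sub (hr : r ≤ 1) (h : 0 < cornerWeight m r) :
    cornerWeight m r * (1 - r) = m - r := by
  have hr1 : 1 - r ≠ 0 := (sub_pos.2 (lt_one_of_cornerWeight_pos hr h)).ne'
  have hpos : 0 < (m - r) / (1 - r) := by simpa [cornerWeight] using h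
  rw [cornerWeight, max_eq_right hpos.le, div_mul_cancel₀ _ hr1]

theorem le_of_cornerWeight_eq_zero (hm : m ≤ 1) (hr : r ≤ 1) (h : cornerWeight m r = 0) :
    m ≤ r := by
  rcases hr.lt_or_eq with hr | rfl
  · have := max_eq_left_iff.1 h
    rw [div_le_iff₀ (sub_pos.2 hr)] at this
    linarith
  · exact hm

theorem le_cornerWeight_add_mul (hm : m ≤ 1) (hr : r ≤ 1) :
    m ≤ cornerWeight m r + (1 - cornerWeight m r) * r := by
  rcases cornerWeight_nonneg.eq_or_lt with h | h
  · rw [← h]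
    simpa using le_of_cornerWeight_eq_zero hm hr h.symm
  · linarith [cornerWeight_mul_one_sub hr h]

theorem one_sub_mul_sq_sub_cornerWeight_mul (hr : r ≤ 1) (h : 0 < cornerWeight (1 - s ^ 2) r) :
    (1 - r) * ((1 - s) ^ 2 - cornerWeight (1 - s ^ 2) r * r) = (r - (1 - s)) ^ 2 := by
  linear_combination (-r) * cornerWeight_mul_one_sub hr h

theorem cornerWeight_mul_le (hr : r ≤ 1) : cornerWeight (1 - s ^ 2) r * r ≤ (1 - s) ^ 2 := by
  rcases cornerWeight_nonneg.eq_or_lt with h | h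
  · rw [← h, zero_mul]
    positivity
  · have hr1 : 0 < 1 - r := sub_pos.2 (lt_one_of_cornerWeight_pos hr h)
    have := one_sub_mul_sq_sub_cornerWeight_mul hr h
    nlinarith [nonneg_of_mul_nonneg_right (this ▸ sq_nonneg _) hr1]

theorem eq_of_cornerWeight_mul_eq (hs0 : 0 < s) (hs1 : s < 1) (hr : r ≤ 1)
    (h : cornerWeight (1 - s ^ 2) r * r = (1 - s) ^ 2) :
    r = 1 - s ∧ cornerWeight (1 - s ^ 2) r = 1 - s := by
  rcases cornerWeight_nonneg.eq_or_lt with h0 | h0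
  · rw [← h0, zero_mul] at h
    nlinarith
  · have hsq := one_sub_mul_sq_sub_cornerWeight_mul hr h0
    rw [h, sub_self, mul_zero, eq_comm, sq_eq_zero_iff, sub_eq_zero] at hsq
    refine ⟨hsq, mul_right_cancel₀ hs0.ne' ?_⟩
    linear_combination cornerWeight_mul_one_sub hr h0 + (cornerWeight (1 - s ^ 2) r - 1) * hsq

end CornerWeight

theorem two_mul_le_of_mul_eq_sq {a1 a2 p q s1 s2 : ℝ} (ha1 : 0 < a1) (ha2 : 0 < a2)
    (hq : q * a1 = s1 ^ 2) (hp : p * a2 = s2 ^ 2) : 2 * s1 * s2 ≤ p * a1 + q * a2 := by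
  refine le_of_mul_le_mul_right ?_ (mul_pos ha1 ha2)
  have key : (p * a1 + q * a2) * (a1 * a2) = (s2 * a1) ^ 2 + (s1 * a2) ^ 2 := by
    linear_combination a1 ^ 2 * hp + a2 ^ 2 * hq
  nlinarith [sq_nonneg (s2 * a1 - s1 * a2)]

section TwoBidders

variable {s1 s2 r1 r2 l1 l2 : ℝ}

theorem dualRevenue_candidate (hs1 : s1 ≠ 0) (hs2 : s2 ≠ 0) (hsum : 1 ≤ s1 + s2) :
    dualRevenue (1 - s1 ^ 2) (1 - s2 ^ 2) (1 - s1) (1 - s2) (1 / s1 - 1) (1 / s2 - 1) =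
      (1 - s1) ^ 2 + (1 - s2) ^ 2 := by
  have h1 : (1 / s1 - 1) * s1 = 1 - s1 := by field_simp
  have h2 : (1 / s2 - 1) * s2 = 1 - s2 := by field_simp
  generalize 1 / s1 - 1 = l1 at h1 ⊢
  generalize 1 / s2 - 1 = l2 at h2 ⊢
  have e2 : 1 - s1 - l2 * (1 - s2) - l1 = -(l1 * (1 - s1)) - l2 * (1 - s2) := by
    linear_combination -h1
  have e3 : 1 - s2 - l1 * (1 - s1) - l2 = -(l1 * (1 - s1)) - l2 * (1 - s2) := by
    linear_combination -h2
  have e1 : -(l1 * (1 - s1)) - l2 * (1 - s2) ≤ 1 - l1 - l2 := by linarith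
  rw [dualRevenue, e2, e3, min_self, min_eq_right (le_min e1 le_rfl)]
  linear_combination (1 - s1) * h1 + (1 - s2) * h2

theorem dualRevenue_lt_of_one_lt_add (hsum : 1 < s1 + s2)
    (hr1 : r1 ≤ 1) (hr2 : r2 ≤ 1) (hl1 : 0 ≤ l1) (hl2 : 0 ≤ l2)
    (hxy : 1 < cornerWeight (1 - s1 ^ 2) r1 + cornerWeight (1 - s2 ^ 2) r2) :
    dualRevenue (1 - s1 ^ 2) (1 - s2 ^ 2) r1 r2 l1 l2 < (1 - s1) ^ 2 + (1 - s2) ^ 2 := by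
  have hx1 := cornerWeight_le_one (sub_le_self 1 (sq_nonneg s1)) hr1
  have hy1 := cornerWeight_le_one (sub_le_self 1 (sq_nonneg s2)) hr2
  have hc1 := le_cornerWeight_add_mul (sub_le_self 1 (sq_nonneg s1)) hr1
  have hc2 := le_cornerWeight_add_mul (sub_le_self 1 (sq_nonneg s2)) hr2
  set x := cornerWeight (1 - s1 ^ 2) r1
  set y := cornerWeight (1 - s2 ^ 2) r2
  have hx : 0 < x := by linarith
  have hy : 0 < y := by linarith
  have hbound : dualRevenue (1 - s1 ^ 2) (1 - s2 ^ 2) r1 r2 l1 l2 ≤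
      (x + y - 1) + (1 - y) * r1 + (1 - x) * r2 :=
    dualRevenue_le_of_feasible hl1 hl2 (by linarith) (by linarith) (by linarith) (by linarith)
      (by linarith) (by linarith)
  have hamgm : 2 * s1 * s2 ≤ (1 - y) * (1 - r1) + (1 - x) * (1 - r2) :=
    two_mul_le_of_mul_eq_sq (sub_pos.2 (lt_one_of_cornerWeight_pos hr1 hx))
      (sub_pos.2 (lt_one_of_cornerWeight_pos hr2 hy))
      (by linear_combination -cornerWeight_mul_one_sub hr1 hx)
      (by linear_combination -cornerWeight_mul_one_sub hr2 hy)
  nlinarith [pow_pos (sub_pos.2 hsum) 2]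

theorem dualRevenue_le_of_add_le_one (hs1 : 0 < s1) (hs1' : s1 < 1) (hs2 : 0 < s2)
    (hs2' : s2 < 1) (hsum : 1 < s1 + s2) (hr1 : r1 ≤ 1) (hr2 : r2 ≤ 1) (hl1 : 0 ≤ l1)
    (hl2 : 0 ≤ l2) (hxy : cornerWeight (1 - s1 ^ 2) r1 + cornerWeight (1 - s2 ^ 2) r2 ≤ 1) :
    dualRevenue (1 - s1 ^ 2) (1 - s2 ^ 2) r1 r2 l1 l2 ≤ (1 - s1) ^ 2 + (1 - s2) ^ 2 ∧
      (dualRevenue (1 - s1 ^ 2) (1 - s2 ^ 2) r1 r2 l1 l2 = (1 - s1) ^ 2 + (1 - s2) ^ 2 →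
        r1 = 1 - s1 ∧ r2 = 1 - s2 ∧ l1 = 1 / s1 - 1 ∧ l2 = 1 / s2 - 1) := by
  have hc1 := le_cornerWeight_add_mul (sub_le_self 1 (sq_nonneg s1)) hr1
  have hc2 := le_cornerWeight_add_mul (sub_le_self 1 (sq_nonneg s2)) hr2
  have hv1 := cornerWeight_mul_le (s := s1) hr1
  have hv2 := cornerWeight_mul_le (s := s2) hr2
  set x := cornerWeight (1 - s1 ^ 2) r1
  set y := cornerWeight (1 - s2 ^ 2) r2
  have hbound : dualRevenue (1 - s1 ^ 2) (1 - s2 ^ 2) r1 r2 l1 l2 ≤ 0 + x * r1 + y * r2 :=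
    dualRevenue_le_of_feasible hl1 hl2 le_rfl cornerWeight_nonneg cornerWeight_nonneg
      (by linarith) (by linarith) (by linarith)
  refine ⟨by linarith, fun heq => ?_⟩
  obtain ⟨rfl, hx⟩ := eq_of_cornerWeight_mul_eq hs1 hs1' hr1 (by linarith)
  obtain ⟨rfl, hy⟩ := eq_of_cornerWeight_mul_eq hs2 hs2' hr2 (by linarith)
  obtain ⟨hl1s, hl2s⟩ := dualRevenue_complementary_slackness hl1 hl2
    ((sub_pos.2 hs1').trans_eq hx.symm) ((sub_pos.2 hs2').trans_eq hy.symm) (by linarith)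
    hc1 hc2 (by linarith)
  refine ⟨rfl, rfl, ?_, ?_⟩ <;> rw [eq_sub_iff_add_eq, eq_div_iff (by positivity)]
  · linarith
  · linarith

theorem dualRevenue_le_candidate (hs1 : 0 < s1) (hs1' : s1 < 1) (hs2 : 0 < s2)
    (hs2' : s2 < 1) (hsum : 1 < s1 + s2) (hr1 : r1 ≤ 1) (hr2 : r2 ≤ 1) (hl1 : 0 ≤ l1)
    (hl2 : 0 ≤ l2) :
    dualRevenue (1 - s1 ^ 2) (1 - s2 ^ 2) r1 r2 l1 l2 ≤ (1 - s1) ^ 2 + (1 - s2) ^ 2 ∧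
      (dualRevenue (1 - s1 ^ 2) (1 - s2 ^ 2) r1 r2 l1 l2 = (1 - s1) ^ 2 + (1 - s2) ^ 2 →
        r1 = 1 - s1 ∧ r2 = 1 - s2 ∧ l1 = 1 / s1 - 1 ∧ l2 = 1 / s2 - 1) := by
  rcases le_or_gt (cornerWeight (1 - s1 ^ 2) r1 + cornerWeight (1 - s2 ^ 2) r2) 1 with h | h
  · exact dualRevenue_le_of_add_le_one hs1 hs1' hs2 hs2' hsum hr1 hr2 hl1 hl2 h
  · have hlt := dualRevenue_lt_of_one_lt_add hsum hr1 hr2 hl1 hl2 h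
    exact ⟨hlt.le, fun heq => absurd heq hlt.ne⟩

end TwoBidders

theorem exists_eq_one_sub_sq {m : ℝ} (hm : 0 < m ∧ m < 1) :
    ∃ s : ℝ, 0 < s ∧ s < 1 ∧ m = 1 - s ^ 2 :=
  ⟨√(1 - m), Real.sqrt_pos.2 (by linarith), (Real.sqrt_lt' one_pos).2 (by norm_num; linarith),
    by rw [Real.sq_sqrt (by linarith)]; ring⟩

theorem stmt14 (m1 m2 : ℝ) (hm1 : 0 < m1 ∧ m1 < 1) (hm2 : 0 < m2 ∧ m2 < 1)
    (hlow : 1 < Real.sqrt (1 - m1) + Real.sqrt (1 - m2)) :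
    let R : ℝ → ℝ → ℝ → ℝ → ℝ := fun r1 r2 l1 l2 =>
      l1 * m1 + l2 * m2 +
        min (min (1 - l1 - l2) (r1 - l2 * r2 - l1))
            (min (r2 - l1 * r1 - l2) (-(l1 * r1) - l2 * r2))
    let r1s : ℝ := 1 - Real.sqrt (1 - m1)
    let r2s : ℝ := 1 - Real.sqrt (1 - m2)
    let l1s : ℝ := 1 / Real.sqrt (1 - m1) - 1
    let l2s : ℝ := 1 / Real.sqrt (1 - m2) - 1
    (0 < r1s ∧ r1s ≤ 1 ∧ 0 < r2s ∧ r2s ≤ 1 ∧ 0 ≤ l1s ∧ 0 ≤ l2s) ∧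
    ∀ r1 r2 l1 l2 : ℝ, 0 < r1 → r1 ≤ 1 → 0 < r2 → r2 ≤ 1 → 0 ≤ l1 → 0 ≤ l2 →
      R r1 r2 l1 l2 ≤ R r1s r2s l1s l2s ∧
      (R r1 r2 l1 l2 = R r1s r2s l1s l2s →
        r1 = r1s ∧ r2 = r2s ∧ l1 = l1s ∧ l2 = l2s) := by
  obtain ⟨s1, hs1, hs1', rfl⟩ := exists_eq_one_sub_sq hm1
  obtain ⟨s2, hs2, hs2', rfl⟩ := exists_eq_one_sub_sq hm2
  rw [sub_sub_cancel, sub_sub_cancel, Real.sqrt_sq hs1.le, Real.sqrt_sq hs2.le] at hlow ⊢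
  intro R r1s r2s l1s l2s
  have hR : R r1s r2s l1s l2s = (1 - s1) ^ 2 + (1 - s2) ^ 2 :=
    dualRevenue_candidate hs1.ne' hs2.ne' hlow.le
  refine ⟨⟨sub_pos.2 hs1', sub_le_self 1 hs1.le, sub_pos.2 hs2', sub_le_self 1 hs2.le,
    sub_nonneg.2 (one_le_one_div hs1 hs1'.le), sub_nonneg.2 (one_le_one_div hs2 hs2'.le)⟩,
    fun r1 r2 l1 l2 _ hr1 _ hr2 hl1 hl2 => ?_⟩
  rw [hR]
  exact dualRevenue_le_candidate hs1 hs1' hs2 hs2' hlow hr1 hr2 hl1 hl2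
end

section
/- Fix v̄ > 0 and 0 < m_1 ≤ m_2 ≤ ... ≤ m_n < v̄ with Σ_{i=1}^n √(1 - m_i/v̄) ≤ n-1 and n ≥ 2. Define k* = min{k ≤ n-1 : Σ_{i=k+1}^n √(v̄-m_i)/√(v̄-m_k) > n-k-1} and λ*_i = 0 for i < k*, λ*_i = (Σ_{j=k*}^n √(v̄-m_j)/(n-k*))/√(v̄-m_i) - 1 for i ≥ k*. Then λ* satisfies Σ_{i=1}^n λ*_i/(1+λ*_i) = 1, λ*_i ≥ 0 for all i, and λ*_i > 0 for i ≥ k*. -/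
/-! Writing `sᵢ = √(v̄ - mᵢ)` and `S = ∑_{j ≥ k*} sⱼ`, the multipliers are `λᵢ = S / ((n - k*) sᵢ) - 1`,
so `λᵢ / (1 + λᵢ) = 1 - (n - k*) sᵢ / S` for `i ≥ k*`; summing these `n - k* + 1` terms gives
`(n - k* + 1) - (n - k*) = 1`. Positivity: the defining inequality of `k*` says `(n - k*) s_{k*} < S`,
and `sᵢ ≤ s_{k*}` for `i ≥ k*` because the `mᵢ` increase. -/

open Finset

lemma div_sub_one_div_one_add_div_sub_one {a b : ℝ} (ha : a ≠ 0) (hb : b ≠ 0) :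
    (a / b - 1) / (1 + (a / b - 1)) = 1 - b / a := by
  rw [add_sub_cancel, div_div_eq_mul_div, sub_mul, div_mul_cancel₀ _ hb, one_mul, sub_div,
    div_self ha]

lemma Finset.sum_one_sub_mul_div_sum {ι : Type*} (t : Finset ι) (s : ι → ℝ) (c : ℝ)
    (hs : ∑ j ∈ t, s j ≠ 0) :
    ∑ i ∈ t, (1 - c * s i / ∑ j ∈ t, s j) = #t - c := by
  rw [sum_sub_distrib, ← sum_div, ← mul_sum, mul_div_assoc, div_self hs, mul_one]
  simp

lemma sub_mul_lt_sum_Icc_of_lt_sum_div {s : ℕ → ℝ} {k n : ℕ} (hkn : k < n) (hk : 0 < s k)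
    (h : (n : ℝ) - k - 1 < ∑ i ∈ Icc (k + 1) n, s i / s k) :
    ((n : ℝ) - k) * s k < ∑ i ∈ Icc k n, s i := by
  rw [← sum_div, lt_div_iff₀ hk] at h
  rw [Icc_eq_cons_Ioc hkn.le, sum_cons, ← Icc_add_one_left_eq_Ioc]
  linarith

section Multipliers

variable {s : ℕ → ℝ} {k n : ℕ}

lemma sum_Icc_div_one_add_eq_one {lam : ℕ → ℝ} (hk : 1 ≤ k) (hkn : k < n)
    (hs : ∀ i ∈ Icc k n, 0 < s i) (hzero : ∀ i ∈ Icc 1 n, i < k → lam i = 0)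
    (hlam : ∀ i ∈ Icc k n, lam i = (∑ j ∈ Icc k n, s j) / ((n : ℝ) - k) / s i - 1) :
    ∑ i ∈ Icc 1 n, lam i / (1 + lam i) = 1 := by
  have hnk : (0 : ℝ) < n - k := sub_pos.mpr (by exact_mod_cast hkn)
  have hS : 0 < ∑ j ∈ Icc k n, s j :=
    sum_pos hs ⟨k, mem_Icc.mpr ⟨le_rfl, hkn.le⟩⟩
  have hterm : ∀ i ∈ Icc k n,
      lam i / (1 + lam i) = 1 - (n - k) * s i / ∑ j ∈ Icc k n, s j := fun i hi => by
    rw [hlam i hi, div_div,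
      div_sub_one_div_one_add_div_sub_one hS.ne' (mul_pos hnk (hs i hi)).ne']
  rw [← sum_subset (Icc_subset_Icc_left hk) fun i hi hik => by
      rw [hzero i hi (by simp only [mem_Icc] at hi hik; omega), zero_div],
    sum_congr rfl hterm, sum_one_sub_mul_div_sum _ _ _ hS.ne', Nat.card_Icc,
    Nat.cast_sub (by omega)]
  push_cast
  ring

lemma sum_Icc_div_div_sub_one_pos (hkn : k < n) (hs : ∀ i ∈ Icc k n, 0 < s i)
    (hanti : ∀ i ∈ Icc k n, s i ≤ s k)
    (hkdef : (n : ℝ) - k - 1 < ∑ i ∈ Icc (k + 1) n, s i / s k) {i : ℕ} (hi : i ∈ Icc k n) :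
    0 < (∑ j ∈ Icc k n, s j) / ((n : ℝ) - k) / s i - 1 := by
  have hnk : (0 : ℝ) < n - k := sub_pos.mpr (by exact_mod_cast hkn)
  have hkS := sub_mul_lt_sum_Icc_of_lt_sum_div hkn (hs k (mem_Icc.mpr ⟨le_rfl, hkn.le⟩)) hkdef
  rw [div_div, sub_pos, one_lt_div (mul_pos hnk (hs i hi))]
  exact (mul_le_mul_of_nonneg_left (hanti i hi) hnk.le).trans_lt hkS

end Multipliers

theorem stmt19_general (n : ℕ) (vbar : ℝ)
    (m : ℕ → ℝ) (hm : ∀ i ∈ Finset.Icc 1 n, 0 < m i ∧ m i < vbar)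
    (hmono : ∀ i j, 1 ≤ i → i ≤ j → j ≤ n → m i ≤ m j)
    (kstar : ℕ)
    (hk1 : kstar ∈ Finset.Icc 1 (n - 1) ∧
      (n : ℝ) - kstar - 1 <
        ∑ i ∈ Finset.Icc (kstar + 1) n, Real.sqrt (vbar - m i) / Real.sqrt (vbar - m kstar))
    (lamstar : ℕ → ℝ)
    (hls1 : ∀ i ∈ Finset.Icc 1 n, i < kstar → lamstar i = 0)
    (hls2 : ∀ i ∈ Finset.Icc 1 n, kstar ≤ i →
      lamstar i = (∑ j ∈ Finset.Icc kstar n, Real.sqrt (vbar - m j)) / ((n : ℝ) - kstar)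
        / Real.sqrt (vbar - m i) - 1) :
    (∑ i ∈ Finset.Icc 1 n, lamstar i / (1 + lamstar i)) = 1 ∧
    (∀ i ∈ Finset.Icc 1 n, 0 ≤ lamstar i) ∧
    (∀ i ∈ Finset.Icc 1 n, kstar ≤ i → 0 < lamstar i) := by
  obtain ⟨hk, hk_def⟩ := hk1
  rw [mem_Icc] at hk
  have hkn : kstar < n := by omega
  have mem_of_mem_Icc {i} (hi : i ∈ Icc kstar n) : i ∈ Icc 1 n :=
    Icc_subset_Icc_left hk.1 hi
  have hs (i) (hi : i ∈ Icc kstar n) : 0 < Real.sqrt (vbar - m i) :=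
    Real.sqrt_pos.mpr (sub_pos.mpr (hm i (mem_of_mem_Icc hi)).2)
  have hanti (i) (hi : i ∈ Icc kstar n) : Real.sqrt (vbar - m i) ≤ Real.sqrt (vbar - m kstar) :=
    Real.sqrt_le_sqrt (sub_le_sub_left (hmono _ _ hk.1 (mem_Icc.mp hi).1 (mem_Icc.mp hi).2) _)
  have hpos (i) (hi : i ∈ Icc 1 n) (hki : kstar ≤ i) : 0 < lamstar i := by
    rw [hls2 i hi hki]
    exact sum_Icc_div_div_sub_one_pos hkn hs hanti hk_def
      (mem_Icc.mpr ⟨hki, (mem_Icc.mp hi).2⟩)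
  refine ⟨sum_Icc_div_one_add_eq_one hk.1 hkn hs hls1 fun i hi =>
    hls2 i (mem_of_mem_Icc hi) (mem_Icc.mp hi).1, fun i hi => ?_, hpos⟩
  rcases lt_or_ge i kstar with hik | hki
  · exact (hls1 i hi hik).ge
  · exact (hpos i hi hki).le

theorem stmt19 (n : ℕ) (hn : 2 ≤ n) (vbar : ℝ) (hvbar : 0 < vbar)
    (m : ℕ → ℝ) (hm : ∀ i ∈ Finset.Icc 1 n, 0 < m i ∧ m i < vbar)
    (hmono : ∀ i j, 1 ≤ i → i ≤ j → j ≤ n → m i ≤ m j)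
    (hhigh : ∑ i ∈ Finset.Icc 1 n, Real.sqrt (1 - m i / vbar) ≤ (n : ℝ) - 1)
    (kstar : ℕ)
    (hk1 : kstar ∈ Finset.Icc 1 (n - 1) ∧
      (n : ℝ) - kstar - 1 <
        ∑ i ∈ Finset.Icc (kstar + 1) n, Real.sqrt (vbar - m i) / Real.sqrt (vbar - m kstar))
    (hk2 : ∀ k ∈ Finset.Icc 1 (n - 1),
      (n : ℝ) - k - 1 <
        ∑ i ∈ Finset.Icc (k + 1) n, Real.sqrt (vbar - m i) / Real.sqrt (vbar - m k) →
      kstar ≤ k)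
    (lamstar : ℕ → ℝ)
    (hls1 : ∀ i ∈ Finset.Icc 1 n, i < kstar → lamstar i = 0)
    (hls2 : ∀ i ∈ Finset.Icc 1 n, kstar ≤ i →
      lamstar i = (∑ j ∈ Finset.Icc kstar n, Real.sqrt (vbar - m j)) / ((n : ℝ) - kstar)
        / Real.sqrt (vbar - m i) - 1) :
    (∑ i ∈ Finset.Icc 1 n, lamstar i / (1 + lamstar i)) = 1 ∧
    (∀ i ∈ Finset.Icc 1 n, 0 ≤ lamstar i) ∧
    (∀ i ∈ Finset.Icc 1 n, kstar ≤ i → 0 < lamstar i) :=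
  stmt19_general n vbar m hm hmono kstar hk1 lamstar hls1 hls2
end
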